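/- arXiv:2511.11157 — 12 statements merged into one kernel-verified Lean document; each statement's English description precedes it below -/
import Mathlib

section
/- The mechanism g^1 is valid: for every message profile m, the sum over all agents i of g^1_i(m) is at most 1. -/
open Finset

/-- The set of agents receiving positive votes from all their impartial agents in `X`. -/
def posI {α : Type*} [Fintype α] [DecidableEq α] (I : α → Finset α)
    (m : α → Finset α) (X : Finset α) : Finset α :=
  univ.filter (fun j => ∀ k ∈ X ∩ I j, j ∈ m k)

/-- `g^1_i(m)`. -/
noncomputable def g1 {α : Type*} [Fintype α] [DecidableEq α] (I : α → Finset α)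
    (m : α → Finset α) (i : α) : ℝ :=
  if i ∈ posI I m (I i) then 1 / ((posI I m (I i)).card : ℝ) else 0

/-- Validity of the mechanism `g^1`: selection probabilities sum to at most 1. -/
theorem stmt1 {α : Type*} [Fintype α] [DecidableEq α] (I : α → Finset α)
    (hirr : ∀ i, i ∉ I i) (hsym : ∀ i j, j ∈ I i ↔ i ∈ I j)
    (m : α → Finset α) :
    ∑ i, g1 I m i ≤ 1 := by
  classical
  set S : Finset α := univ.filter (fun i => i ∈ posI I m (I i)) with hS
  have hsum : ∑ i, g1 I m i = ∑ i ∈ S, 1 / ((posI I m (I i)).card : ℝ) := by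
    rw [hS, sum_filter]
    refine Finset.sum_congr rfl fun i _ => ?_
    simp [g1]
  rw [hsum]
  rcases S.eq_empty_or_nonempty with h | h
  · simp [h]
  · have hScard : (0 : ℝ) < (S.card : ℝ) := by
      exact_mod_cast Finset.card_pos.mpr h
    have hsub : ∀ i ∈ S, S ⊆ posI I m (I i) := by
      intro i _ j hj
      have hjP : j ∈ posI I m (I j) := (mem_filter.mp hj).2
      have hjP' := (mem_filter.mp hjP).2
      simp only [posI, mem_filter, mem_univ, true_and, mem_inter] at *
      intro k hk
      exact hjP' k ⟨hk.2, hk.2⟩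
    calc ∑ i ∈ S, 1 / ((posI I m (I i)).card : ℝ)
        ≤ ∑ i ∈ S, 1 / (S.card : ℝ) := by
          refine Finset.sum_le_sum fun i hi => ?_
          apply one_div_le_one_div_of_le hScard
          exact_mod_cast Finset.card_le_card (hsub i hi)
      _ = 1 := by
          rw [Finset.sum_const, nsmul_eq_mul]
          field_simp
end

section
/- Under the Intersection Condition I (for all i, j ∈ V, I_i ∩ I_j ≠ ∅), the mechanism g^1 is efficient: if m is the truthful message profile for a state with a nonempty set N of needy agents, then for every agent i, g^1_i(m) = 1/|N| if i ∈ N and g^1_i(m) = 0 otherwise; in particular the probabilities of needy agents sum to 1. -/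
open Finset

/-- Efficiency of `g^1` under the Intersection Condition I, at the truthful profile. -/
theorem stmt2 {α : Type*} [Fintype α] [DecidableEq α] (I : α → Finset α)
    (hirr : ∀ i, i ∉ I i) (hsym : ∀ i j, j ∈ I i ↔ i ∈ I j)
    (hIC : ∀ i j : α, (I i ∩ I j).Nonempty)
    (N : Finset α) (hN : N.Nonempty) :
    (∀ i, g1 I (fun _ => N) i = if i ∈ N then 1 / (N.card : ℝ) else 0) ∧
    ∑ i ∈ N, g1 I (fun _ => N) i = 1 := by
  have hpos : ∀ i : α, posI I (fun _ => N) (I i) = N := by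
    intro i
    ext j
    simp only [posI, mem_filter, mem_univ, true_and, mem_inter]
    constructor
    · intro h
      obtain ⟨k, hk⟩ := hIC i j
      exact h k (mem_inter.mp hk)
    · intro hj k _; exact hj
  have hg : ∀ i, g1 I (fun _ => N) i = if i ∈ N then 1 / (N.card : ℝ) else 0 := by
    intro i; simp [g1, hpos i]
  refine ⟨hg, ?_⟩
  have hcard : (N.card : ℝ) ≠ 0 := by
    exact_mod_cast (card_pos.mpr hN).ne'
  rw [Finset.sum_congr rfl (fun i hi => by rw [hg i, if_pos hi])]
  rw [Finset.sum_const, nsmul_eq_mul]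
  field_simp
end

section
/- The mechanism g^1 is dominant strategy incentive compatible in the following sense: for any agent j, the value g^1_i(m) for any agent i ∉ I_j (including i = j) does not depend on j's message m_j; that is, changing m_j to any m'_j leaves g^1_i unchanged for all i ∉ I_j. -/
open Finset

/-- DSIC of `g^1`: agent `j`'s message does not affect the selection probability of
any agent `i` that is not impartial to `j` (including `i = j`). -/
theorem stmt3 {α : Type*} [Fintype α] [DecidableEq α] (I : α → Finset α)
    (hirr : ∀ i, i ∉ I i) (hsym : ∀ i j, j ∈ I i ↔ i ∈ I j)
    (m : α → Finset α) (j : α) (m'j : Finset α) :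
    ∀ i, i ∉ I j → g1 I (Function.update m j m'j) i = g1 I m i := by
  intro i hij
  have hji : j ∉ I i := fun h => hij ((hsym i j).mp h)
  have hpos : posI I (Function.update m j m'j) (I i) = posI I m (I i) := by
    ext x
    simp only [posI, mem_filter, mem_univ, true_and, mem_inter]
    constructor <;> intro h k hk <;>
    · have hkj : k ≠ j := fun e => hji (e ▸ hk.1)
      have := h k hk
      simpa [Function.update_of_ne hkj] using this
  simp [g1, hpos]
end

section
/- For a fixed sink agent k, the mechanism g^{2,k} is valid: for every message profile m, the sum over agents i ∈ V \ {k} of g^{2,k}_i(m) is at most 1, so that setting g^{2,k}_k(m) = 1 − Σ_{i ≠ k} g^{2,k}_i(m) yields a nonnegative probability distribution summing to exactly 1. -/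
open Finset

/-- The set of agents receiving positive votes from all their enemies in `X`. -/
def posE {α : Type*} [Fintype α] [DecidableEq α] (E : α → Finset α)
    (m : α → Finset α) (X : Finset α) : Finset α :=
  univ.filter (fun j => ∀ l ∈ X ∩ E j, j ∈ m l)

/-- `g^{2,k}_i(m)` for `i ≠ k`. -/
noncomputable def g2 {α : Type*} [Fintype α] [DecidableEq α] (E : α → Finset α)
    (k : α) (m : α → Finset α) (i : α) : ℝ :=
  if i ∈ posE E m (E k) then 1 / (((posE E m (E i ∩ E k)).erase k).card : ℝ) else 0

/-- Validity of `g^{2,k}`: the probabilities of agents other than `k` sum to at most 1,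
so `k`'s residual probability is nonnegative and the whole vector is a probability
distribution summing to 1. -/
theorem stmt4 {α : Type*} [Fintype α] [DecidableEq α] (E : α → Finset α)
    (hirr : ∀ i, i ∉ E i) (hsym : ∀ i j, j ∈ E i ↔ i ∈ E j)
    (k : α) (m : α → Finset α) :
    (∑ i ∈ univ.erase k, g2 E k m i ≤ 1) ∧
    (0 ≤ 1 - ∑ i ∈ univ.erase k, g2 E k m i) ∧
    ((1 - ∑ i ∈ univ.erase k, g2 E k m i) + ∑ i ∈ univ.erase k, g2 E k m i = 1) := by
  have key : ∑ i ∈ univ.erase k, g2 E k m i ≤ 1 := by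
    set S := (posE E m (E k)).erase k with hS
    have hsum : ∑ i ∈ univ.erase k, g2 E k m i = ∑ i ∈ S, g2 E k m i := by
      refine (Finset.sum_subset (fun x hx => ?_) (fun x hx hxS => ?_)).symm
      · exact Finset.mem_erase.mpr ⟨(Finset.mem_erase.mp hx).1, Finset.mem_univ x⟩
      · have hxk : x ≠ k := (Finset.mem_erase.mp hx).1
        have : x ∉ posE E m (E k) := fun h => hxS (Finset.mem_erase.mpr ⟨hxk, h⟩)
        simp [g2, this]
    rw [hsum]
    have hbound : ∀ i ∈ S, g2 E k m i ≤ 1 / (S.card : ℝ) := by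
      intro i hi
      have hip : i ∈ posE E m (E k) := (Finset.mem_erase.mp hi).2
      have hsubset : S ⊆ (posE E m (E i ∩ E k)).erase k := by
        intro x hx
        obtain ⟨hxk, hxp⟩ := Finset.mem_erase.mp hx
        refine Finset.mem_erase.mpr ⟨hxk, ?_⟩
        simp only [posE, Finset.mem_filter, Finset.mem_univ, true_and] at hxp ⊢
        intro l hl
        rw [Finset.mem_inter, Finset.mem_inter] at hl
        exact hxp l (Finset.mem_inter.mpr ⟨hl.1.2, hl.2⟩)
      have hpos : 0 < (S.card : ℝ) := by
        exact_mod_cast Finset.card_pos.mpr ⟨i, hi⟩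
      have hcard : (S.card : ℝ) ≤ (((posE E m (E i ∩ E k)).erase k).card : ℝ) := by
        exact_mod_cast Finset.card_le_card hsubset
      rw [g2, if_pos hip]
      exact one_div_le_one_div_of_le hpos hcard
    calc ∑ i ∈ S, g2 E k m i ≤ ∑ _i ∈ S, 1 / (S.card : ℝ) := Finset.sum_le_sum hbound
      _ = S.card * (1 / (S.card : ℝ)) := by rw [Finset.sum_const, nsmul_eq_mul]
      _ ≤ 1 := by
          by_cases h : S.card = 0
          · simp [h]
          · rw [mul_one_div, div_self (by exact_mod_cast h)]
  exact ⟨key, by linarith, by ring⟩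
end

section
/- If the Intersection Condition E(k) holds (for all i, j ∈ V \ {k}, E_i ∩ E_j ∩ E_k ≠ ∅), then the mechanism g^{2,k} is efficient: at the truthful message profile m for any state with needy set N ≠ ∅, the total probability assigned to needy agents is 1. Specifically, if N \ {k} ≠ ∅ then each agent i ∈ N \ {k} gets probability 1/|N \ {k}| and all other agents (including k) get 0, while if N = {k} then agent k gets probability 1. -/
open Finset

/-- The full mechanism `g^{2,k}`, with agent `k` receiving the residual probability. -/
noncomputable def g2full {α : Type*} [Fintype α] [DecidableEq α] (E : α → Finset α)
    (k : α) (m : α → Finset α) (i : α) : ℝ :=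
  if i = k then 1 - ∑ j ∈ univ.erase k, g2 E k m j else g2 E k m i

/-- Efficiency of `g^{2,k}` under the Intersection Condition E(k), at the truthful
profile for a state with nonempty needy set `N`. -/
theorem stmt5 {α : Type*} [Fintype α] [DecidableEq α] (E : α → Finset α)
    (hirr : ∀ i, i ∉ E i) (hsym : ∀ i j, j ∈ E i ↔ i ∈ E j)
    (k : α) (hIC : ∀ i j : α, i ≠ k → j ≠ k → (E i ∩ E j ∩ E k).Nonempty)
    (N : Finset α) (hN : N.Nonempty) :
    (∑ i ∈ N, g2full E k (fun _ => N) i = 1) ∧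
    ((N.erase k).Nonempty →
      ∀ i, g2full E k (fun _ => N) i = if i ∈ N.erase k then 1 / ((N.erase k).card : ℝ) else 0) ∧
    (N = {k} → g2full E k (fun _ => N) k = 1) := by
  -- membership in posE (E k) for i ≠ k
  have hA : ∀ i : α, i ≠ k → (i ∈ posE E (fun _ => N) (E k) ↔ i ∈ N) := by
    intro i hi
    simp only [posE, mem_filter, mem_univ, true_and, mem_inter, and_imp]
    constructor
    · intro h
      obtain ⟨l, hl⟩ := hIC i i hi hi
      simp only [mem_inter, inter_self] at hl
      exact h l hl.2 hl.1
    · intro h l _ _; exact h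
  have hB : ∀ i : α, i ≠ k →
      (posE E (fun _ => N) (E i ∩ E k)).erase k = N.erase k := by
    intro i hi
    ext j
    simp only [mem_erase, posE, mem_filter, mem_univ, true_and, mem_inter, and_imp]
    constructor
    · rintro ⟨hjk, h⟩
      obtain ⟨l, hl⟩ := hIC i j hi hjk
      simp only [mem_inter] at hl
      exact ⟨hjk, h l hl.1.1 hl.2 hl.1.2⟩
    · rintro ⟨hjk, hjN⟩
      exact ⟨hjk, fun l _ _ _ => hjN⟩
  have hg : ∀ i : α, i ≠ k → g2 E k (fun _ => N) i =
      if i ∈ N then 1 / ((N.erase k).card : ℝ) else 0 := by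
    intro i hi
    rw [g2, hB i hi]
    by_cases h : i ∈ N
    · rw [if_pos ((hA i hi).2 h), if_pos h]
    · rw [if_neg (fun hc => h ((hA i hi).1 hc)), if_neg h]
  have hsum : ∑ j ∈ univ.erase k, g2 E k (fun _ => N) j =
      ((N.erase k).card : ℝ) * (1 / ((N.erase k).card : ℝ)) := by
    rw [Finset.sum_congr rfl (fun j hj => hg j (mem_erase.mp hj).1)]
    rw [← Finset.sum_filter]
    have : (univ.erase k).filter (· ∈ N) = N.erase k := by
      ext j; simp [mem_erase, and_comm]
    rw [this, Finset.sum_const, nsmul_eq_mul]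
  by_cases hne : (N.erase k).Nonempty
  · have hcard : ((N.erase k).card : ℝ) ≠ 0 := by
      exact_mod_cast Finset.card_ne_zero_of_mem hne.choose_spec
    have hsum1 : ∑ j ∈ univ.erase k, g2 E k (fun _ => N) j = 1 := by
      rw [hsum]; field_simp
    have hform : ∀ i, g2full E k (fun _ => N) i =
        if i ∈ N.erase k then 1 / ((N.erase k).card : ℝ) else 0 := by
      intro i
      by_cases hik : i = k
      · subst hik
        simp [g2full, hsum1, Finset.notMem_erase]
      · rw [g2full, if_neg hik, hg i hik]
        by_cases h : i ∈ N
        · rw [if_pos h, if_pos (mem_erase.mpr ⟨hik, h⟩)]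
        · rw [if_neg h, if_neg (fun hc => h (mem_erase.mp hc).2)]
    refine ⟨?_, fun _ => hform, ?_⟩
    · rw [Finset.sum_congr rfl (fun i _ => hform i), ← Finset.sum_filter]
      have : N.filter (· ∈ N.erase k) = N.erase k := by
        ext j; simp [mem_erase]
      rw [this, Finset.sum_const, nsmul_eq_mul]
      field_simp
    · intro hNk
      exfalso
      obtain ⟨j, hj⟩ := hne
      rw [hNk] at hj
      simp at hj
  · -- N.erase k = ∅, so N = {k}
    have hNk : N = {k} := by
      have : N.erase k = ∅ := Finset.not_nonempty_iff_eq_empty.mp hne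
      have hsub : N ⊆ {k} := fun x hx => by
        by_contra hc
        simp only [mem_singleton] at hc
        exact (Finset.notMem_empty x) (this ▸ mem_erase.mpr ⟨hc, hx⟩)
      obtain ⟨x, hx⟩ := hN
      have := hsub hx
      simp only [mem_singleton] at this
      subst this
      exact Finset.Subset.antisymm hsub (Finset.singleton_subset_iff.mpr hx)
    subst hNk
    have hsum0 : ∑ j ∈ univ.erase k, g2 E k (fun _ => ({k} : Finset α)) j = 0 := by
      apply Finset.sum_eq_zero
      intro j hj
      have hjk := (mem_erase.mp hj).1
      rw [hg j hjk, if_neg (by simp [hjk])]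
    have hk1 : g2full E k (fun _ => ({k} : Finset α)) k = 1 := by
      simp [g2full, hsum0]
    exact ⟨by simp [hk1], fun h => absurd h (by simp), fun _ => hk1⟩
end

section
/- Let n ≥ 4. There is no mechanism g mapping message profiles to sub-probability vectors on V that is both dominant strategy incentive compatible and efficient for all possible networks of friends, enemies, and impartials, when the planner does not know the network. Specifically, considering state θ^1 where only agent 1 is needy and all pairs within S = {1,...,n−2} are enemies (all other pairs impartial), and state θ^n where only agent n is needy and only the pair {n−1, n} are enemies (all other pairs impartial), the requirements g_1(m^1) = 1, g_n(m^n) = 1 at truthful profiles, together with DSIC (no agent's unilateral deviation changes her own probability or the total probability of her enemies or of her friends), lead to a contradiction at the mixed profile (m^n_1,...,m^n_{n−2}, m^1_{n−1}, m^1_n): the probabilities of agents in S would sum to 1 and simultaneously the probabilities of agents outside S would sum to 1. -/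
open Finset

/-- A message (reported type): a reported needy set, a reported friend set and a
reported enemy set. -/
abbrev Msg (n : ℕ) := Finset (Fin n) × Finset (Fin n) × Finset (Fin n)

/-- Agent 1. -/
def agent1 (n : ℕ) (hn : 4 ≤ n) : Fin n := ⟨0, by omega⟩

/-- Agent n. -/
def agentn (n : ℕ) (hn : 4 ≤ n) : Fin n := ⟨n - 1, by omega⟩

/-- The set `S = {1, …, n-2}` of the first `n - 2` agents. -/
def Sset (n : ℕ) : Finset (Fin n) := univ.filter (fun i => (i : ℕ) < n - 2)

/-- Enemy sets in state `θ¹`: all pairs inside `S` are enemies, all other pairs are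
impartial. -/
def E1 (n : ℕ) (i : Fin n) : Finset (Fin n) :=
  if (i : ℕ) < n - 2 then (Sset n).erase i else ∅

/-- Enemy sets in state `θⁿ`: agents `n-1` and `n` are enemies, all other pairs are
impartial. -/
def En (n : ℕ) (hn : 4 ≤ n) (i : Fin n) : Finset (Fin n) :=
  if (i : ℕ) = n - 2 then {agentn n hn}
  else if i = agentn n hn then {(⟨n - 2, by omega⟩ : Fin n)} else ∅

/-- Friend sets (empty in both states). -/
def Fr (n : ℕ) (_ : Fin n) : Finset (Fin n) := ∅

/-- Truthful message profile in state `θ¹`, where only agent 1 is needy. -/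
def t1 (n : ℕ) (hn : 4 ≤ n) (i : Fin n) : Msg n := ({agent1 n hn}, Fr n i, E1 n i)

/-- Truthful message profile in state `θⁿ`, where only agent n is needy. -/
def tn (n : ℕ) (hn : 4 ≤ n) (i : Fin n) : Msg n := ({agentn n hn}, Fr n i, En n hn i)

/-- Intermediate profiles on the path from `t1` to the mixed profile: the first `k`
agents report as in state `θⁿ`, the rest as in state `θ¹`. -/
def mixedP (n : ℕ) (hn : 4 ≤ n) (k : ℕ) (i : Fin n) : Msg n :=
  if (i : ℕ) < k then tn n hn i else t1 n hn i

/-- When the planner does not know the network, there is no mechanism that is both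
DSIC and efficient: efficiency at the truthful profiles of states `θ¹` and `θⁿ`,
together with the DSIC requirement that no agent's unilateral deviation from her
truthful message (in either state) changes her own probability, the total
probability of her friends, or the total probability of her enemies, is
contradictory. -/
theorem stmt7 (n : ℕ) (hn : 4 ≤ n) :
    ¬ ∃ g : ((Fin n → Msg n) → Fin n → ℝ),
      (∀ m i, 0 ≤ g m i) ∧
      (∀ m, ∑ i, g m i ≤ 1) ∧
      g (t1 n hn) (agent1 n hn) = 1 ∧
      g (tn n hn) (agentn n hn) = 1 ∧
      (∀ (i : Fin n) (m : Fin n → Msg n) (a : Msg n),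
        g (Function.update m i (t1 n hn i)) i = g (Function.update m i a) i ∧
        ∑ j ∈ Fr n i, g (Function.update m i (t1 n hn i)) j
          = ∑ j ∈ Fr n i, g (Function.update m i a) j ∧
        ∑ j ∈ E1 n i, g (Function.update m i (t1 n hn i)) j
          = ∑ j ∈ E1 n i, g (Function.update m i a) j) ∧
      (∀ (i : Fin n) (m : Fin n → Msg n) (a : Msg n),
        g (Function.update m i (tn n hn i)) i = g (Function.update m i a) i ∧
        ∑ j ∈ Fr n i, g (Function.update m i (tn n hn i)) j
          = ∑ j ∈ Fr n i, g (Function.update m i a) j ∧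
        ∑ j ∈ En n hn i, g (Function.update m i (tn n hn i)) j
          = ∑ j ∈ En n hn i, g (Function.update m i a) j) := by
  rintro ⟨g, hpos, htot, h1, hn1, d1, dn⟩
  have hav : ((agentn n hn : Fin n) : ℕ) = n - 1 := rfl
  set a : Fin n := agentn n hn with ha
  set b : Fin n := (⟨n - 2, by omega⟩ : Fin n) with hb
  have hbv : (b : ℕ) = n - 2 := rfl
  have hab : a ≠ b := Fin.ne_of_val_ne (by rw [hav, hbv]; omega)
  -- Step walk from t1 to the mixed profile preserves the sum over S.
  have keyA : ∀ k, k ≤ n - 2 →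
      ∑ j ∈ Sset n, g (mixedP n hn k) j = ∑ j ∈ Sset n, g (t1 n hn) j := by
    intro k hk
    induction k with
    | zero =>
      have h0 : mixedP n hn 0 = t1 n hn := by
        funext i; simp [mixedP]
      rw [h0]
    | succ k ih =>
      have hkn : k < n := by omega
      set ik : Fin n := ⟨k, hkn⟩ with hik
      have hikv : (ik : ℕ) = k := rfl
      have hmem : ik ∈ Sset n := by
        simp only [Sset, mem_filter, mem_univ, true_and, hikv]; omega
      have hE : E1 n ik = (Sset n).erase ik := by
        simp only [E1, hikv, if_pos (show k < n - 2 by omega)]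
      have hPk : Function.update (mixedP n hn k) ik (t1 n hn ik) = mixedP n hn k := by
        have hik2 : mixedP n hn k ik = t1 n hn ik := by
          simp [mixedP, hikv]
        rw [← hik2, Function.update_eq_self]
      have hPk1 : Function.update (mixedP n hn k) ik (tn n hn ik)
          = mixedP n hn (k + 1) := by
        funext i
        rcases eq_or_ne i ik with rfl | hne
        · simp [mixedP, hikv]
        · rw [Function.update_of_ne hne]
          have hvne : (i : ℕ) ≠ k := fun h => hne (Fin.ext (by rw [h, hikv]))
          by_cases h : (i : ℕ) < k
          · simp [mixedP, h, Nat.lt_succ_of_lt h]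
          · have h2 : ¬ (i : ℕ) < k + 1 := by omega
            simp [mixedP, h, h2]
      obtain ⟨e1, -, e3⟩ := d1 ik (mixedP n hn k) (tn n hn ik)
      rw [hPk, hPk1] at e1 e3
      rw [hE] at e3
      calc ∑ j ∈ Sset n, g (mixedP n hn (k + 1)) j
          = g (mixedP n hn (k + 1)) ik
              + ∑ j ∈ (Sset n).erase ik, g (mixedP n hn (k + 1)) j :=
            (Finset.add_sum_erase _ _ hmem).symm
        _ = g (mixedP n hn k) ik + ∑ j ∈ (Sset n).erase ik, g (mixedP n hn k) j := by
            rw [← e1, ← e3]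
        _ = ∑ j ∈ Sset n, g (mixedP n hn k) j := Finset.add_sum_erase _ _ hmem
        _ = ∑ j ∈ Sset n, g (t1 n hn) j := ih (by omega)
  -- Step walk from tn to the mixed profile preserves agent n's probability.
  have hEb : En n hn b = {a} := by
    simp [En, hbv]; exact ha.symm
  have hEa : En n hn a = {b} := by
    simp [En, hav, show ¬ n - 1 = n - 2 by omega]; rw [if_pos ha]
  set q1 : Fin n → Msg n := Function.update (tn n hn) b (t1 n hn b) with hq1def
  have hq1a : g q1 a = 1 := by
    obtain ⟨-, -, f3⟩ := dn b (tn n hn) (t1 n hn b)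
    rw [Function.update_eq_self, hEb] at f3
    simp only [Finset.sum_singleton] at f3
    rw [hq1def, ← f3]
    exact hn1
  have hq2 : Function.update q1 a (t1 n hn a) = mixedP n hn (n - 2) := by
    funext i
    rcases eq_or_ne i a with rfl | hia
    · simp [mixedP, hav, show ¬ n - 1 < n - 2 by omega]
    · rw [Function.update_of_ne hia, hq1def]
      rcases eq_or_ne i b with rfl | hib
      · simp [mixedP, hbv]
      · rw [Function.update_of_ne hib]
        have h1v : (i : ℕ) ≠ n - 1 := fun h => hia (Fin.ext (by rw [h, hav]))
        have h2v : (i : ℕ) ≠ n - 2 := fun h => hib (Fin.ext (by rw [h, hbv]))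
        have := i.isLt
        simp [mixedP, show (i : ℕ) < n - 2 by omega]
  have hga : g (mixedP n hn (n - 2)) a = 1 := by
    obtain ⟨g1, -, -⟩ := dn a q1 (t1 n hn a)
    have hq1aeq : q1 a = tn n hn a := by
      rw [hq1def, Function.update_of_ne hab]
    rw [← hq1aeq, Function.update_eq_self, hq2] at g1
    rw [← g1]
    exact hq1a
  -- Contradiction: total probability at the mixed profile would exceed 1.
  have hmem1 : agent1 n hn ∈ Sset n := by
    simp only [Sset, mem_filter, mem_univ, true_and, agent1]; omega
  have hS1 : 1 ≤ ∑ j ∈ Sset n, g (t1 n hn) j := by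
    calc (1 : ℝ) = g (t1 n hn) (agent1 n hn) := h1.symm
      _ ≤ ∑ j ∈ Sset n, g (t1 n hn) j :=
          Finset.single_le_sum (fun j _ => hpos _ j) hmem1
  have hSm : 1 ≤ ∑ j ∈ Sset n, g (mixedP n hn (n - 2)) j := by
    rw [keyA (n - 2) le_rfl]; exact hS1
  have hnotmem : a ∉ Sset n := by
    simp only [Sset, mem_filter, mem_univ, true_and, hav]; omega
  have h2 : (2 : ℝ) ≤ ∑ i, g (mixedP n hn (n - 2)) i := by
    calc (2 : ℝ) = 1 + 1 := by norm_num
      _ ≤ g (mixedP n hn (n - 2)) a + ∑ j ∈ Sset n, g (mixedP n hn (n - 2)) j := by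
          rw [hga]; linarith
      _ = ∑ j ∈ insert a (Sset n), g (mixedP n hn (n - 2)) j :=
          (Finset.sum_insert hnotmem).symm
      _ ≤ ∑ i, g (mixedP n hn (n - 2)) i :=
          Finset.sum_le_sum_of_subset_of_nonneg (subset_univ _) (fun i _ _ => hpos _ i)
  linarith [htot (mixedP n hn (n - 2))]
end

section
/- For any n ≥ 5 (and in fact any n ≥ 3), in any symmetric friendship network on n vertices (where each agent i has a friend set F_i ⊆ V \ {i}, with j ∈ F_i ↔ i ∈ F_j), there exist two distinct agents i and j such that |F_i \ (F_j ∪ {j})| ≤ (n−2)/2 and |F_j \ (F_i ∪ {i})| ≤ (n−2)/2, with at least one inequality strict. -/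
open Finset

/-- In any symmetric irreflexive friendship network on `n ≥ 3` vertices there are two
distinct agents `i`, `j` with `|F_i \ (F_j ∪ {j})| ≤ (n-2)/2` and
`|F_j \ (F_i ∪ {i})| ≤ (n-2)/2`, at least one inequality being strict. -/
theorem stmt8 {α : Type*} [Fintype α] [DecidableEq α] (n : ℕ)
    (hcard : Fintype.card α = n) (hn : 3 ≤ n)
    (F : α → Finset α) (hirr : ∀ i, i ∉ F i) (hsym : ∀ i j, j ∈ F i ↔ i ∈ F j) :
    ∃ i j : α, i ≠ j ∧
      ((F i \ insert j (F j)).card : ℝ) ≤ ((n : ℝ) - 2) / 2 ∧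
      ((F j \ insert i (F i)).card : ℝ) ≤ ((n : ℝ) - 2) / 2 ∧
      (((F i \ insert j (F j)).card : ℝ) < ((n : ℝ) - 2) / 2 ∨
       ((F j \ insert i (F i)).card : ℝ) < ((n : ℝ) - 2) / 2) := by
  classical
  by_contra hcon
  push_neg at hcon
  -- sum bound: the two sdiff sets are disjoint and avoid i and j
  have L0 : ∀ i j : α, i ≠ j →
      (F i \ insert j (F j)).card + (F j \ insert i (F i)).card + 2 ≤ n := by
    intro i j hij
    have hdisj : Disjoint (F i \ insert j (F j)) (F j \ insert i (F i)) := by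
      rw [Finset.disjoint_left]
      intro k hk1 hk2
      exact (Finset.mem_sdiff.1 hk2).2
        (Finset.mem_insert_of_mem (Finset.mem_sdiff.1 hk1).1)
    have hsub : (F i \ insert j (F j)) ∪ (F j \ insert i (F i)) ⊆ univ \ {i, j} := by
      intro k hk
      rcases Finset.mem_union.1 hk with hk | hk <;>
        rw [Finset.mem_sdiff] at hk <;> rw [Finset.mem_sdiff]
      · refine ⟨Finset.mem_univ _, ?_⟩
        intro hmem
        rcases Finset.mem_insert.1 hmem with h | h
        · exact hirr i (h ▸ hk.1)
        · exact hk.2 (Finset.mem_insert.2 (Or.inl (Finset.mem_singleton.1 h)))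
      · refine ⟨Finset.mem_univ _, ?_⟩
        intro hmem
        rcases Finset.mem_insert.1 hmem with h | h
        · exact hk.2 (Finset.mem_insert.2 (Or.inl h))
        · exact hirr j (Finset.mem_singleton.1 h ▸ hk.1)
    have h1 := Finset.card_le_card hsub
    rw [Finset.card_union_of_disjoint hdisj] at h1
    have h2 : (univ \ ({i, j} : Finset α)).card = n - 2 := by
      rw [Finset.card_sdiff_of_subset (Finset.subset_univ _)]
      rw [Finset.card_insert_of_notMem (by simp [hij]), Finset.card_singleton,
        Finset.card_univ, hcard]
    omega
  -- failure dichotomy in ℕ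
  have key : ∀ i j : α, i ≠ j →
      n - 1 ≤ 2 * (F i \ insert j (F j)).card ∨
      n - 1 ≤ 2 * (F j \ insert i (F i)).card ∨
      (2 * (F i \ insert j (F j)).card + 2 = n ∧
       2 * (F j \ insert i (F i)).card + 2 = n) := by
    intro i j hij
    by_cases h1 : 2 * (F i \ insert j (F j)).card + 2 ≤ n
    · by_cases h2 : 2 * (F j \ insert i (F i)).card + 2 ≤ n
      · have hnR : (2 : ℝ) ≤ (n : ℝ) := by exact_mod_cast (by omega : 2 ≤ n)
        have c1 : ((F i \ insert j (F j)).card : ℝ) ≤ ((n : ℝ) - 2) / 2 := by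
          have : ((2 * (F i \ insert j (F j)).card + 2 : ℕ) : ℝ) ≤ (n : ℝ) :=
            by exact_mod_cast h1
          push_cast at this
          linarith
        have c2 : ((F j \ insert i (F i)).card : ℝ) ≤ ((n : ℝ) - 2) / 2 := by
          have : ((2 * (F j \ insert i (F i)).card + 2 : ℕ) : ℝ) ≤ (n : ℝ) :=
            by exact_mod_cast h2
          push_cast at this
          linarith
        obtain ⟨e1, e2⟩ := hcon i j hij c1 c2
        right; right
        constructor
        · have : (n : ℝ) ≤ 2 * ((F i \ insert j (F j)).card : ℝ) + 2 := by linarith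
          have : (n : ℕ) ≤ 2 * (F i \ insert j (F j)).card + 2 := by exact_mod_cast this
          omega
        · have : (n : ℝ) ≤ 2 * ((F j \ insert i (F i)).card : ℝ) + 2 := by linarith
          have : (n : ℕ) ≤ 2 * (F j \ insert i (F i)).card + 2 := by exact_mod_cast this
          omega
      · right; left; omega
    · left; omega
  -- basic cardinality bounds
  have hB1 : ∀ i j : α, (F i \ insert j (F j)).card ≤ (F i).card :=
    fun i j => Finset.card_le_card (Finset.sdiff_subset)
  have hB2 : ∀ i j : α, j ∈ F i → (F i \ insert j (F j)).card + 1 ≤ (F i).card := by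
    intro i j hj
    have h1 : F i \ insert j (F j) ⊆ (F i).erase j := by
      intro k hk
      rw [Finset.mem_sdiff] at hk
      rw [Finset.mem_erase]
      exact ⟨fun h => hk.2 (by simp [h]), hk.1⟩
    have h2 := Finset.card_le_card h1
    rw [Finset.card_erase_of_mem hj] at h2
    have h3 : 1 ≤ (F i).card := Finset.card_pos.2 ⟨j, hj⟩
    omega
  have hB3 : ∀ i j : α, (F i \ insert j (F j)).card + (F j).card + 1 ≤ n := by
    intro i j
    have hdisj : Disjoint (F i \ insert j (F j)) (insert j (F j)) := Finset.sdiff_disjoint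
    have h1 := Finset.card_le_univ ((F i \ insert j (F j)) ∪ insert j (F j))
    rw [Finset.card_union_of_disjoint hdisj, hcard,
      Finset.card_insert_of_notMem (hirr j)] at h1
    omega
  have hB4 : ∀ i j : α, i ≠ j → i ∉ F j →
      (F i \ insert j (F j)).card + (F j).card + 2 ≤ n := by
    intro i j hij hiFj
    have hiT : i ∉ insert j (F j) := by simp [hij, hiFj]
    have hdisj : Disjoint (F i \ insert j (F j)) (insert i (insert j (F j))) := by
      rw [Finset.disjoint_left]
      intro k hk1 hk2
      rw [Finset.mem_sdiff] at hk1
      rcases Finset.mem_insert.1 hk2 with h | h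
      · exact hirr i (h ▸ hk1.1)
      · exact hk1.2 h
    have h1 := Finset.card_le_univ ((F i \ insert j (F j)) ∪ insert i (insert j (F j)))
    rw [Finset.card_union_of_disjoint hdisj, hcard,
      Finset.card_insert_of_notMem hiT,
      Finset.card_insert_of_notMem (hirr j)] at h1
    omega
  have hB5 : ∀ i j : α,
      (F i \ insert j (F j)).card + (F i ∩ insert j (F j)).card = (F i).card :=
    fun i j => Finset.card_sdiff_add_card_inter _ _
  -- adjacent-pair dichotomy
  have adjL : ∀ i j : α, j ∈ F i →
      (n + 1 ≤ 2 * (F i).card ∧ 2 * (F j).card + 1 ≤ n) ∨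
      (n + 1 ≤ 2 * (F j).card ∧ 2 * (F i).card + 1 ≤ n) ∨
      (2 * (F i).card = n ∧ 2 * (F j).card = n ∧ F i ∩ F j = ∅) := by
    intro i j hj
    have hij : i ≠ j := fun h => hirr i (h ▸ hj)
    have hji : i ∈ F j := (hsym i j).1 hj
    have b2ij := hB2 i j hj
    have b2ji := hB2 j i hji
    have b3ij := hB3 i j
    have b3ji := hB3 j i
    rcases key i j hij with h | h | ⟨h1, h2⟩
    · left; omega
    · right; left; omega
    · right; right
      refine ⟨by omega, by omega, ?_⟩
      have b5 := hB5 i j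
      have hinter : (F i ∩ insert j (F j)).card = 1 := by omega
      obtain ⟨x, hx⟩ := Finset.card_eq_one.1 hinter
      have hjx : j ∈ F i ∩ insert j (F j) :=
        Finset.mem_inter.2 ⟨hj, Finset.mem_insert_self _ _⟩
      rw [hx, Finset.mem_singleton] at hjx
      apply Finset.eq_empty_iff_forall_notMem.2
      intro k hk
      rw [Finset.mem_inter] at hk
      have : k ∈ F i ∩ insert j (F j) :=
        Finset.mem_inter.2 ⟨hk.1, Finset.mem_insert_of_mem hk.2⟩
      rw [hx, Finset.mem_singleton] at this
      have hkj : k = j := this.trans hjx.symm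
      rw [hkj] at hk
      exact hirr j hk.2
  -- nonadjacent-pair dichotomy
  have nonadjL : ∀ i j : α, i ≠ j → j ∉ F i →
      (n ≤ 2 * (F i).card + 1 ∧ 2 * (F j).card + 3 ≤ n) ∨
      (n ≤ 2 * (F j).card + 1 ∧ 2 * (F i).card + 3 ≤ n) ∨
      (2 * (F i).card + 2 = n ∧ 2 * (F j).card + 2 = n ∧ F i ∩ F j = ∅) := by
    intro i j hij hjFi
    have hiFj : i ∉ F j := fun h => hjFi ((hsym i j).2 h)
    have b1ij := hB1 i j
    have b1ji := hB1 j i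
    have b4ij := hB4 i j hij hiFj
    have b4ji := hB4 j i hij.symm hjFi
    rcases key i j hij with h | h | ⟨h1, h2⟩
    · left; omega
    · right; left; omega
    · right; right
      refine ⟨by omega, by omega, ?_⟩
      have b5 := hB5 i j
      have hinter : (F i ∩ insert j (F j)).card = 0 := by omega
      have hempty := Finset.card_eq_zero.1 hinter
      apply Finset.subset_empty.1
      rw [← hempty]
      intro k hk
      rw [Finset.mem_inter] at hk ⊢
      exact ⟨hk.1, Finset.mem_insert_of_mem hk.2⟩
  -- nobody has 2d = n
  have hS1 : ∀ i : α, 2 * (F i).card ≠ n := by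
    intro i hi
    have hd2 : 1 < (F i).card := by omega
    obtain ⟨j, hjmem, k, hkmem, hjk⟩ := Finset.one_lt_card.1 hd2
    have hdj : 2 * (F j).card = n ∧ F i ∩ F j = ∅ := by
      rcases adjL i j hjmem with h | h | ⟨_, h1, h2⟩
      · omega
      · omega
      · exact ⟨h1, h2⟩
    have hdk : 2 * (F k).card = n ∧ F i ∩ F k = ∅ := by
      rcases adjL i k hkmem with h | h | ⟨_, h1, h2⟩
      · omega
      · omega
      · exact ⟨h1, h2⟩
    have hiFj : i ∈ F j := (hsym i j).1 hjmem
    have hiFk : i ∈ F k := (hsym i k).1 hkmem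
    by_cases hkj : k ∈ F j
    · rcases adjL j k hkj with h | h | ⟨_, _, hd⟩
      · omega
      · omega
      · have : i ∈ F j ∩ F k := Finset.mem_inter.2 ⟨hiFj, hiFk⟩
        rw [hd] at this
        exact Finset.notMem_empty i this
    · rcases nonadjL j k hjk hkj with h | h | ⟨h1, _, _⟩
      · omega
      · omega
      · omega
  -- at most one high-degree vertex
  have hHi2 : ∀ k l : α, k ≠ l → n < 2 * (F k).card → n < 2 * (F l).card → False := by
    intro k l hkl hk hl
    by_cases hadj : l ∈ F k
    · rcases adjL k l hadj with h | h | ⟨h1, _, _⟩ <;> omega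
    · rcases nonadjL k l hkl hadj with h | h | ⟨h1, _, _⟩ <;> omega
  -- at most one low-degree vertex
  have hLo2 : ∀ k l : α, k ≠ l → 2 * (F k).card + 2 < n → 2 * (F l).card + 2 < n →
      False := by
    intro k l hkl hk hl
    by_cases hadj : l ∈ F k
    · rcases adjL k l hadj with h | h | ⟨h1, _, _⟩ <;> omega
    · rcases nonadjL k l hkl hadj with h | h | ⟨h1, _, _⟩ <;> omega
  -- at most one vertex with 2d+1 = n
  have hM2 : ∀ k l : α, k ≠ l → 2 * (F k).card + 1 = n → 2 * (F l).card + 1 = n →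
      False := by
    intro k l hkl hk hl
    by_cases hadj : l ∈ F k
    · rcases adjL k l hadj with h | h | ⟨h1, _, _⟩ <;> omega
    · rcases nonadjL k l hkl hadj with h | h | ⟨h1, _, _⟩ <;> omega
  -- at most one vertex with 2d+2 = n
  have hA2 : ∀ k l : α, k ≠ l → 2 * (F k).card + 2 = n → 2 * (F l).card + 2 = n →
      False := by
    intro k l hkl hk hl
    have hadj : l ∉ F k := by
      intro hadj
      rcases adjL k l hadj with h | h | ⟨h1, _, _⟩ <;> omega
    rcases nonadjL k l hkl hadj with h | h | ⟨_, _, hd⟩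
    · omega
    · omega
    · have hkpos : 0 < (F k).card := by omega
      have hlpos : 0 < (F l).card := by omega
      obtain ⟨u, hu⟩ := Finset.card_pos.1 hkpos
      obtain ⟨v, hv⟩ := Finset.card_pos.1 hlpos
      have hdu : n + 1 ≤ 2 * (F u).card := by
        rcases adjL k u hu with h | h | ⟨h1, _, _⟩
        · omega
        · omega
        · omega
      have hdv : n + 1 ≤ 2 * (F v).card := by
        rcases adjL l v hv with h | h | ⟨h1, _, _⟩
        · omega
        · omega
        · omega
      have huv : u ≠ v := by
        intro h
        have : u ∈ F k ∩ F l := Finset.mem_inter.2 ⟨hu, h ▸ hv⟩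
        rw [hd] at this
        exact Finset.notMem_empty u this
      exact hHi2 u v huv (by omega) (by omega)
  -- counting
  let f1 : Finset α := univ.filter (fun i => 2 * (F i).card + 2 < n)
  let f2 : Finset α := univ.filter (fun i => 2 * (F i).card + 2 = n)
  let f3 : Finset α := univ.filter (fun i => 2 * (F i).card + 1 = n)
  let f4 : Finset α := univ.filter (fun i => n < 2 * (F i).card)
  have hf1 : f1.card ≤ 1 := by
    rw [Finset.card_le_one]
    intro x hx y hy
    by_contra hxy
    exact hLo2 x y hxy (Finset.mem_filter.1 hx).2 (Finset.mem_filter.1 hy).2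
  have hf2 : f2.card ≤ 1 := by
    rw [Finset.card_le_one]
    intro x hx y hy
    by_contra hxy
    exact hA2 x y hxy (Finset.mem_filter.1 hx).2 (Finset.mem_filter.1 hy).2
  have hf3 : f3.card ≤ 1 := by
    rw [Finset.card_le_one]
    intro x hx y hy
    by_contra hxy
    exact hM2 x y hxy (Finset.mem_filter.1 hx).2 (Finset.mem_filter.1 hy).2
  have hf4 : f4.card ≤ 1 := by
    rw [Finset.card_le_one]
    intro x hx y hy
    by_contra hxy
    exact hHi2 x y hxy (Finset.mem_filter.1 hx).2 (Finset.mem_filter.1 hy).2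
  have hcover : (univ : Finset α) ⊆ f1 ∪ f2 ∪ f3 ∪ f4 := by
    intro i _
    have hs := hS1 i
    simp only [f1, f2, f3, f4, Finset.mem_union, Finset.mem_filter, Finset.mem_univ,
      true_and]
    omega
  have hcount : n ≤ f1.card + f2.card + f3.card + f4.card := by
    calc n = (univ : Finset α).card := hcard.symm
      _ ≤ (f1 ∪ f2 ∪ f3 ∪ f4).card := Finset.card_le_card hcover
      _ ≤ (f1 ∪ f2 ∪ f3).card + f4.card := Finset.card_union_le _ _
      _ ≤ (f1 ∪ f2).card + f3.card + f4.card := by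
          have := Finset.card_union_le (f1 ∪ f2) f3
          omega
      _ ≤ f1.card + f2.card + f3.card + f4.card := by
          have := Finset.card_union_le f1 f2
          omega
  rcases Nat.even_or_odd n with he | ho
  · -- n even: f3 empty
    have h3e : f3.card = 0 := by
      rw [Finset.card_eq_zero]
      rw [Finset.eq_empty_iff_forall_notMem]
      intro i hi
      have := (Finset.mem_filter.1 hi).2
      rcases he with ⟨m, hm⟩
      omega
    rcases he with ⟨m, hm⟩
    omega
  · -- n odd: f2 empty, hence n = 3 and f1,f3,f4 all nonempty
    have h2e : f2.card = 0 := by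
      rw [Finset.card_eq_zero]
      rw [Finset.eq_empty_iff_forall_notMem]
      intro i hi
      have := (Finset.mem_filter.1 hi).2
      rcases ho with ⟨m, hm⟩
      omega
    have hn3 : n = 3 := by
      rcases ho with ⟨m, hm⟩
      omega
    have hf1pos : 0 < f1.card := by omega
    have hf4pos : 0 < f4.card := by omega
    obtain ⟨x, hx⟩ := Finset.card_pos.1 hf1pos
    obtain ⟨z, hz⟩ := Finset.card_pos.1 hf4pos
    have hxd : (F x).card = 0 := by
      have := (Finset.mem_filter.1 hx).2
      omega
    have hzd : 2 ≤ (F z).card := by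
      have := (Finset.mem_filter.1 hz).2
      omega
    have hxz : x ≠ z := by
      intro h
      rw [h] at hxd
      omega
    have hFz : F z = univ \ {z} := by
      apply Finset.eq_of_subset_of_card_le
      · intro k hk
        rw [Finset.mem_sdiff, Finset.mem_singleton]
        exact ⟨Finset.mem_univ _, fun h => hirr z (h ▸ hk)⟩
      · rw [Finset.card_sdiff_of_subset (Finset.subset_univ _), Finset.card_singleton,
          Finset.card_univ, hcard]
        omega
    have hxFz : x ∈ F z := by
      rw [hFz, Finset.mem_sdiff, Finset.mem_singleton]
      exact ⟨Finset.mem_univ _, hxz⟩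
    have : z ∈ F x := (hsym z x).1 hxFz
    rw [Finset.card_eq_zero.1 hxd] at this
    exact Finset.notMem_empty z this
end

section
/- In a symmetric friendship graph on n ≥ 5 vertices, there can be at most one vertex i with |F_i| < (n−2)/2 and at most one vertex i with |F_i| > (n−2)/2, given that for every pair of distinct vertices i, j, either |F_i \ (F_j ∪ {j})| ≥ (n−2)/2 or |F_j \ (F_i ∪ {i})| ≥ (n−2)/2. -/
open Finset

lemma cardBound {α : Type*} [Fintype α] [DecidableEq α] {n : ℕ}
    (hcard : Fintype.card α = n) (A : Finset α) {a b : α} (hab : a ≠ b)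
    (haA : a ∉ A) (hbA : b ∉ A) (S : Finset α)
    (hS : ∀ x ∈ S, x ≠ a ∧ x ≠ b ∧ x ∉ A) :
    (S.card : ℝ) ≤ (n : ℝ) - (A.card : ℝ) - 2 := by
  have hB : (insert a (insert b A)).card = A.card + 2 := by
    rw [card_insert_of_notMem (by simp [haA, hab]), card_insert_of_notMem hbA]
  have hsub : S ⊆ univ \ insert a (insert b A) := by
    intro x hx
    obtain ⟨h1, h2, h3⟩ := hS x hx
    simp [h1, h2, h3]
  have hle : S.card ≤ n - (A.card + 2) := by
    calc S.card ≤ (univ \ insert a (insert b A)).card := card_le_card hsub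
    _ = n - (A.card + 2) := by rw [card_univ_diff, hB, hcard]
  have hle2 : A.card + 2 ≤ n := by
    rw [← hcard, ← hB]; exact card_le_card (subset_univ _)
  have := (Nat.cast_le (α := ℝ)).mpr hle
  rw [Nat.cast_sub hle2] at this
  push_cast at this ⊢
  linarith

/-- In a symmetric friendship graph on `n ≥ 5` vertices in which for every pair of
distinct vertices `i`, `j` either `|F_i \ (F_j ∪ {j})| ≥ (n-2)/2` or
`|F_j \ (F_i ∪ {i})| ≥ (n-2)/2`, there is at most one vertex with degree below
`(n-2)/2` and at most one vertex with degree above `(n-2)/2`. -/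
theorem stmt9 {α : Type*} [Fintype α] [DecidableEq α] (n : ℕ)
    (hcard : Fintype.card α = n) (hn : 5 ≤ n)
    (F : α → Finset α) (hirr : ∀ i, i ∉ F i) (hsym : ∀ i j, j ∈ F i ↔ i ∈ F j)
    (hyp : ∀ i j : α, i ≠ j →
      ((n : ℝ) - 2) / 2 ≤ ((F i \ insert j (F j)).card : ℝ) ∨
      ((n : ℝ) - 2) / 2 ≤ ((F j \ insert i (F i)).card : ℝ)) :
    (∀ i j : α, ((F i).card : ℝ) < ((n : ℝ) - 2) / 2 →
      ((F j).card : ℝ) < ((n : ℝ) - 2) / 2 → i = j) ∧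
    (∀ i j : α, ((n : ℝ) - 2) / 2 < ((F i).card : ℝ) →
      ((n : ℝ) - 2) / 2 < ((F j).card : ℝ) → i = j) := by
  set t : ℝ := ((n : ℝ) - 2) / 2 with ht
  have hn' : (5 : ℝ) ≤ (n : ℝ) := by exact_mod_cast hn
  have ht32 : (3 : ℝ) / 2 ≤ t := by rw [ht]; linarith
  constructor
  · -- low degree part
    intro i j hi hj
    by_contra hij
    have hb1 : ((F i \ insert j (F j)).card : ℝ) ≤ ((F i).card : ℝ) := by
      exact_mod_cast card_le_card (sdiff_subset)
    have hb2 : ((F j \ insert i (F i)).card : ℝ) ≤ ((F j).card : ℝ) := by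
      exact_mod_cast card_le_card (sdiff_subset)
    rcases hyp i j hij with h | h <;> linarith
  · -- high degree part
    intro i j hi hj
    by_contra hij
    -- small degree lemma: if x not adjacent to y, x ≠ y, deg y > t then deg x ≤ t
    have small : ∀ x y : α, x ≠ y → x ∉ F y → t < ((F y).card : ℝ) →
        ((F x).card : ℝ) ≤ t := by
      intro x y hxy hxFy hdy
      have hyFx : y ∉ F x := fun h => hxFy ((hsym x y).mp h)
      rcases hyp x y hxy with h | h
      · exfalso
        have : ((F x \ insert y (F y)).card : ℝ) ≤ (n : ℝ) - ((F y).card : ℝ) - 2 := by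
          refine cardBound hcard (F y) hxy (hirr y |> fun _ => hxFy) (hirr y) _ ?_
          · intro z hz
            simp only [mem_sdiff, mem_insert] at hz
            exact ⟨fun h => (hirr x) (h ▸ hz.1), fun h => hz.2 (Or.inl h),
              fun h => hz.2 (Or.inr h)⟩
        rw [ht] at *; linarith
      · have : ((F y \ insert x (F x)).card : ℝ) ≤ (n : ℝ) - ((F x).card : ℝ) - 2 := by
          refine cardBound hcard (F x) (Ne.symm hxy) hyFx (hirr x) _ ?_
          intro z hz
          simp only [mem_sdiff, mem_insert] at hz
          exact ⟨fun h => (hirr y) (h ▸ hz.1), fun h => hz.2 (Or.inl h),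
            fun h => hz.2 (Or.inr h)⟩
        rw [ht] at *; linarith
    -- the main asymmetric argument
    have aux : ∀ a b : α, a ≠ b → b ∈ F a → t < ((F b).card : ℝ) →
        t ≤ ((F a \ insert b (F b)).card : ℝ) → False := by
      intro a b hab hbFa hdb hS
      set S := F a \ insert b (F b) with hSdef
      have hS2 : 1 < S.card := by
        by_contra h
        push_neg at h
        have : (S.card : ℝ) ≤ 1 := by exact_mod_cast h
        linarith
      obtain ⟨k, hk, k', hk', hkk'⟩ := one_lt_card.mp hS2
      simp only [hSdef, mem_sdiff, mem_insert, not_or] at hk hk'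
      obtain ⟨hkFa, hkb, hkFb⟩ := hk
      obtain ⟨hk'Fa, hk'b, hk'Fb⟩ := hk'
      have hdk : ((F k).card : ℝ) ≤ t := small k b hkb hkFb hdb
      have hdk' : ((F k').card : ℝ) ≤ t := small k' b hk'b hk'Fb hdb
      have haFk : a ∈ F k := (hsym a k).mp hkFa
      have haFk' : a ∈ F k' := (hsym a k').mp hk'Fa
      have hbound : ∀ u v : α, a ∈ F u → a ∈ F v →
          ((F u \ insert v (F v)).card : ℝ) ≤ ((F u).card : ℝ) - 1 := by
        intro u v hu hv
        have hsub : F u \ insert v (F v) ⊆ (F u).erase a := by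
          intro z hz
          simp only [mem_sdiff, mem_insert, not_or] at hz
          refine mem_erase.mpr ⟨fun h => hz.2.2 (h ▸ hv), hz.1⟩
        have h1 : (F u \ insert v (F v)).card ≤ ((F u).erase a).card := card_le_card hsub
        rw [card_erase_of_mem hu] at h1
        have h2 : 1 ≤ (F u).card := card_pos.mpr ⟨a, hu⟩
        have := (Nat.cast_le (α := ℝ)).mpr h1
        rw [Nat.cast_sub h2] at this
        push_cast at this ⊢
        linarith
      rcases hyp k k' hkk' with h | h
      · have := hbound k k' haFk haFk'; linarith
      · have := hbound k' k haFk' haFk; linarith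
    by_cases hadj : j ∈ F i
    · rcases hyp i j hij with h | h
      · exact aux i j hij hadj hj h
      · exact aux j i (Ne.symm hij) ((hsym i j).mp hadj) hi h
    · -- non-adjacent: direct contradiction
      have hiFj : i ∉ F j := fun h => hadj ((hsym j i).mp h)
      have b1 : ((F i \ insert j (F j)).card : ℝ) ≤ (n : ℝ) - ((F j).card : ℝ) - 2 := by
        refine cardBound hcard (F j) hij hiFj (hirr j) _ ?_
        intro z hz
        simp only [mem_sdiff, mem_insert, not_or] at hz
        exact ⟨fun h => (hirr i) (h ▸ hz.1), hz.2.1, hz.2.2⟩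
      have b2 : ((F j \ insert i (F i)).card : ℝ) ≤ (n : ℝ) - ((F i).card : ℝ) - 2 := by
        refine cardBound hcard (F i) (Ne.symm hij) hadj (hirr i) _ ?_
        intro z hz
        simp only [mem_sdiff, mem_insert, not_or] at hz
        exact ⟨fun h => (hirr j) (h ▸ hz.1), hz.2.1, hz.2.2⟩
      rcases hyp i j hij with h | h <;> (rw [ht] at *; linarith)
end

section
/- In a signed network satisfying structural balance, every EF-component (maximal set of nodes pairwise connected by paths of friendship or enmity links) is either a single F-clique, or the union of exactly two F-cliques Y_1 and Y_2 such that every node of Y_1 is an enemy of every node of Y_2. -/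
/-- In a signed network satisfying structural balance, every EF-component is either a
single F-clique, or the disjoint union of two F-cliques `Y₁` and `Y₂` with every node
of `Y₁` an enemy of every node of `Y₂`. -/
theorem stmt11 {α : Type*} [Fintype α] (friend enemy : α → α → Prop)
    (hFsym : ∀ i j, friend i j → friend j i)
    (hEsym : ∀ i j, enemy i j → enemy j i)
    (hFirr : ∀ i, ¬ friend i i) (hEirr : ∀ i, ¬ enemy i i)
    (hFEdisj : ∀ i j, ¬ (friend i j ∧ enemy i j))
    (hFF : ∀ i j k, friend i j → friend j k → i ≠ k → friend i k)
    (hEE : ∀ i j k, enemy i j → enemy j k → i ≠ k → friend i k)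
    (hEF : ∀ i j k, enemy i j → friend j k → i ≠ k → enemy i k) :
    ∀ v : α,
      (∀ i ∈ {x | Relation.ReflTransGen (fun a b => friend a b ∨ enemy a b) v x},
        ∀ j ∈ {x | Relation.ReflTransGen (fun a b => friend a b ∨ enemy a b) v x},
          i ≠ j → friend i j) ∨
      (∃ Y₁ Y₂ : Set α, Y₁.Nonempty ∧ Y₂.Nonempty ∧ Disjoint Y₁ Y₂ ∧
        Y₁ ∪ Y₂ = {x | Relation.ReflTransGen (fun a b => friend a b ∨ enemy a b) v x} ∧
        (∀ i ∈ Y₁, ∀ j ∈ Y₁, i ≠ j → friend i j) ∧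
        (∀ i ∈ Y₂, ∀ j ∈ Y₂, i ≠ j → friend i j) ∧
        (∀ i ∈ Y₁, ∀ j ∈ Y₂, enemy i j)) := by
  intro v
  set C := {x | Relation.ReflTransGen (fun a b => friend a b ∨ enemy a b) v x} with hC
  -- key: reachable implies direct relation
  have key : ∀ x ∈ C, x ≠ v → friend v x ∨ enemy v x := by
    intro x hx
    induction hx with
    | refl => intro h; exact absurd rfl h
    | tail hb hstep ih =>
      rename_i b c
      intro hcv
      by_cases hbv : b = v
      · subst hbv; exact hstep
      · rcases ih hbv with hvb | hvb
        · rcases hstep with hbc | hbc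
          · exact Or.inl (hFF v b c hvb hbc (Ne.symm hcv))
          · exact Or.inr (hEsym _ _ (hEF c b v (hEsym _ _ hbc) (hFsym _ _ hvb) hcv))
        · rcases hstep with hbc | hbc
          · exact Or.inr (hEF v b c hvb hbc (Ne.symm hcv))
          · exact Or.inl (hEE v b c hvb hbc (Ne.symm hcv))
  by_cases hY2 : ∃ x ∈ C, enemy v x
  · right
    refine ⟨{x ∈ C | x = v ∨ friend v x}, {x ∈ C | enemy v x}, ⟨v, Relation.ReflTransGen.refl, Or.inl rfl⟩, hY2, ?_, ?_, ?_, ?_, ?_⟩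
    · rw [Set.disjoint_left]
      rintro x ⟨hxC, hx⟩ ⟨_, hex⟩
      rcases hx with rfl | hf
      · exact hEirr _ hex
      · exact hFEdisj _ _ ⟨hf, hex⟩
    · ext x
      constructor
      · rintro (⟨h, _⟩ | ⟨h, _⟩) <;> exact h
      · intro hx
        by_cases hxv : x = v
        · exact Or.inl ⟨hx, Or.inl hxv⟩
        · rcases key x hx hxv with h | h
          · exact Or.inl ⟨hx, Or.inr h⟩
          · exact Or.inr ⟨hx, h⟩
    · rintro i ⟨_, hi⟩ j ⟨_, hj⟩ hij
      rcases hi with rfl | hi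
      · rcases hj with rfl | hj
        · exact absurd rfl hij
        · exact hj
      · rcases hj with rfl | hj
        · exact hFsym _ _ hi
        · exact hFF i v j (hFsym _ _ hi) hj hij
    · rintro i ⟨_, hi⟩ j ⟨_, hj⟩ hij
      exact hEE i v j (hEsym _ _ hi) hj hij
    · rintro i ⟨_, hi⟩ j ⟨_, hj⟩
      rcases hi with rfl | hi
      · exact hj
      · have hij : j ≠ i := fun h => hFEdisj v i ⟨hi, h ▸ hj⟩
        exact hEsym _ _ (hEF j v i (hEsym _ _ hj) hi hij)
  · left
    push_neg at hY2
    intro i hi j hj hij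
    by_cases hiv : i = v
    · subst hiv
      rcases key j hj (Ne.symm hij) with h | h
      · exact h
      · exact absurd h (hY2 j hj)
    · have hvi := (key i hi hiv).resolve_right (hY2 i hi)
      by_cases hjv : j = v
      · subst hjv; exact hFsym _ _ hvi
      · exact hFF i v j (hFsym _ _ hvi) ((key j hj hjv).resolve_right (hY2 j hj)) hij
end

section
/- In a signed network satisfying structural balance, if two distinct F-components Y and Y' lie in the same EF-component, then every node of Y is an enemy of every node of Y': any single enmity link between Y and Y' propagates, via the rule that a friend of an enemy is an enemy, to all cross pairs. -/
/-- In a signed network satisfying structural balance, if two nodes lie in the same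
EF-component but in distinct F-components, then they are enemies; hence every node of
one F-component is an enemy of every node of the other. -/
theorem stmt13 {α : Type*} [Fintype α] (friend enemy : α → α → Prop)
    (hFsym : ∀ i j, friend i j → friend j i)
    (hEsym : ∀ i j, enemy i j → enemy j i)
    (hFirr : ∀ i, ¬ friend i i) (hEirr : ∀ i, ¬ enemy i i)
    (hFEdisj : ∀ i j, ¬ (friend i j ∧ enemy i j))
    (hFF : ∀ i j k, friend i j → friend j k → i ≠ k → friend i k)
    (hEE : ∀ i j k, enemy i j → enemy j k → i ≠ k → friend i k)
    (hEF : ∀ i j k, enemy i j → friend j k → i ≠ k → enemy i k) :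
    ∀ i j : α,
      Relation.ReflTransGen (fun a b => friend a b ∨ enemy a b) i j →
      ¬ Relation.ReflTransGen friend i j → enemy i j := by
  -- transitive closure of friendship collapses to friendship (or equality)
  have hRT : ∀ i j : α, Relation.ReflTransGen friend i j → i = j ∨ friend i j := by
    intro i j h
    induction h with
    | refl => exact Or.inl rfl
    | @tail b c _ hjk ih =>
      rcases ih with rfl | hij
      · exact Or.inr hjk
      · rcases eq_or_ne i c with rfl | hne
        · exact Or.inl rfl
        · exact Or.inr (hFF _ _ _ hij hjk hne)
  intro i j hpath
  have key : Relation.ReflTransGen friend i j ∨ enemy i j := by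
    induction hpath with
    | refl => exact Or.inl Relation.ReflTransGen.refl
    | @tail j k hij hjk ih =>
      rcases ih with hf | he
      · rcases hjk with hfjk | hejk
        · exact Or.inl (hf.tail hfjk)
        · rcases hRT _ _ hf with rfl | hfij
          · exact Or.inr hejk
          · rcases eq_or_ne i k with rfl | hik
            · exact Or.inl Relation.ReflTransGen.refl
            · exact Or.inr (hEsym _ _ (hEF k j i (hEsym _ _ hejk) (hFsym _ _ hfij)
                (fun h => hik h.symm)))
      · rcases eq_or_ne i k with rfl | hik
        · exact Or.inl Relation.ReflTransGen.refl
        · rcases hjk with hfjk | hejk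
          · exact Or.inr (hEF i j k he hfjk hik)
          · exact Or.inl (Relation.ReflTransGen.single (hEE i j k he hejk hik))
  intro hnf
  exact key.resolve_left hnf
end

section
/- Under the random dictatorship mechanism, the probability of choosing a needy agent on network G equals (1/n)[m_{0,0}(1−(1−q)^{n−1}) + Σ_{i=1}^{n−1} m_{0,i}(1−(1−q)^i) + Σ_{f=1}^{n−1} Σ_{i=0}^{n−f−1} m_{f,i}(1−(1−q)^f)], where m_{f,i} is the number of agents with f friends and i impartials; this probability is always at least q, with equality if and only if every agent either has exactly one friend, or no friends and exactly one impartial. -/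
open Finset

/-- The number the random dictator `j` effectively draws from: her friends if she has
any, otherwise her impartials if she has any, otherwise all `n - 1` other agents
(her enemies). -/
def wt {α : Type*} [Fintype α] [DecidableEq α] (n : ℕ) (F I : α → Finset α) (j : α) : ℕ :=
  if 0 < (F j).card then (F j).card
  else if 0 < (I j).card then (I j).card
  else n - 1

/-- `m_{f,i}`: the number of agents with `f` friends and `i` impartials. -/
def mcount {α : Type*} [Fintype α] [DecidableEq α] (F I : α → Finset α) (f i : ℕ) : ℕ :=
  (univ.filter (fun j => (F j).card = f ∧ (I j).card = i)).card

/-- The probability that the random dictatorship mechanism selects a needy agent. -/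
noncomputable def PRD {α : Type*} [Fintype α] [DecidableEq α] (n : ℕ) (q : ℝ)
    (F I : α → Finset α) : ℝ :=
  (1 / (n : ℝ)) * ∑ j, (1 - (1 - q) ^ wt n F I j)

/-- The random dictatorship probability of selecting a needy agent equals the formula
of the paper, is at least `q`, and equals `q` iff every agent has exactly one friend,
or no friend and exactly one impartial. -/
theorem stmt16 {α : Type*} [Fintype α] [DecidableEq α] (n : ℕ)
    (hcard : Fintype.card α = n) (hn : 3 ≤ n)
    (q : ℝ) (hq0 : 0 < q) (hq1 : q < 1)
    (F I E : α → Finset α)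
    (hpart : ∀ i, F i ∪ I i ∪ E i = univ.erase i)
    (hFI : ∀ i, Disjoint (F i) (I i)) (hFE : ∀ i, Disjoint (F i) (E i))
    (hIE : ∀ i, Disjoint (I i) (E i))
    (hFsym : ∀ i j, j ∈ F i ↔ i ∈ F j) (hIsym : ∀ i j, j ∈ I i ↔ i ∈ I j)
    (hEsym : ∀ i j, j ∈ E i ↔ i ∈ E j) :
    PRD n q F I =
      (1 / (n : ℝ)) *
        ((mcount F I 0 0 : ℝ) * (1 - (1 - q) ^ (n - 1)) +
         (∑ i ∈ Finset.Icc 1 (n - 1), (mcount F I 0 i : ℝ) * (1 - (1 - q) ^ i)) +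
         (∑ f ∈ Finset.Icc 1 (n - 1), ∑ i ∈ Finset.range (n - f),
            (mcount F I f i : ℝ) * (1 - (1 - q) ^ f))) ∧
    q ≤ PRD n q F I ∧
    (PRD n q F I = q ↔ ∀ j, (F j).card = 1 ∨ ((F j).card = 0 ∧ (I j).card = 1)) := by

  have hn0 : (0:ℝ) < n := by positivity
  have hq' : 0 < 1 - q := by linarith
  have hq'' : 1 - q < 1 := by linarith
  -- basic cardinality fact
  have hfi : ∀ j : α, (F j).card + (I j).card ≤ n - 1 := by
    intro j
    have hsub : F j ∪ I j ⊆ univ.erase j := by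
      rw [← hpart j]; intro x hx
      simp only [Finset.mem_union] at hx ⊢
      tauto
    have := Finset.card_le_card hsub
    rwa [Finset.card_union_of_disjoint (hFI j), Finset.card_erase_of_mem (Finset.mem_univ j),
      Finset.card_univ, hcard] at this
  have hwt1 : ∀ j : α, 1 ≤ wt n F I j := by
    intro j
    unfold wt
    split_ifs with h1 h2 <;> omega
  -- term lower bound
  have hterm : ∀ j : α, q ≤ 1 - (1 - q) ^ wt n F I j := by
    intro j
    have : (1 - q) ^ wt n F I j ≤ (1 - q) ^ 1 :=
      pow_le_pow_of_le_one (by linarith) (by linarith) (hwt1 j)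
    rw [pow_one] at this
    linarith
  -- PART 1 : formula
  have hformula : (∑ j : α, (1 - (1 - q) ^ wt n F I j)) =
      (mcount F I 0 0 : ℝ) * (1 - (1 - q) ^ (n - 1)) +
       (∑ i ∈ Finset.Icc 1 (n - 1), (mcount F I 0 i : ℝ) * (1 - (1 - q) ^ i)) +
       (∑ f ∈ Finset.Icc 1 (n - 1), ∑ i ∈ Finset.range (n - f),
          (mcount F I f i : ℝ) * (1 - (1 - q) ^ f)) := by
    have hmaps : ∀ j ∈ (univ : Finset α),
        ((F j).card, (I j).card) ∈ Finset.range n ×ˢ Finset.range n := by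
      intro j _
      have := hfi j
      simp only [Finset.mem_product, Finset.mem_range]
      constructor <;> omega
    have hfib := Finset.sum_fiberwise_of_maps_to hmaps
      (fun j => (1 - (1 - q) ^ wt n F I j))
    rw [← hfib, Finset.sum_product]
    have hinner : ∀ f i : ℕ,
        (∑ j ∈ univ.filter (fun j => ((F j).card, (I j).card) = (f, i)),
          (1 - (1 - q) ^ wt n F I j)) =
        (mcount F I f i : ℝ) *
          (1 - (1 - q) ^ (if 0 < f then f else if 0 < i then i else n - 1)) := by
      intro f i
      rw [Finset.sum_congr rfl (fun j hj => ?_), Finset.sum_const, nsmul_eq_mul]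
      · have hset : (univ.filter (fun j : α => ((F j).card, (I j).card) = (f, i))) =
            univ.filter (fun j : α => (F j).card = f ∧ (I j).card = i) := by
          apply Finset.filter_congr
          intro j _
          simp [Prod.ext_iff]
        rw [hset]
        rfl
      · simp only [Finset.mem_filter, Prod.mk.injEq] at hj
        unfold wt
        rw [hj.2.1, hj.2.2]
    have hins : Finset.range n = insert 0 (Finset.Icc 1 (n - 1)) := by
      ext x
      simp only [Finset.mem_range, Finset.mem_insert, Finset.mem_Icc]
      omega
    calc ∑ f ∈ Finset.range n, ∑ i ∈ Finset.range n,
          ∑ j ∈ univ.filter (fun j => ((F j).card, (I j).card) = (f, i)),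
            (1 - (1 - q) ^ wt n F I j)
        = ∑ f ∈ Finset.range n, ∑ i ∈ Finset.range n, (mcount F I f i : ℝ) *
            (1 - (1 - q) ^ (if 0 < f then f else if 0 < i then i else n - 1)) := by
          exact Finset.sum_congr rfl fun f _ => Finset.sum_congr rfl fun i _ => hinner f i
      _ = _ := by
          rw [hins, Finset.sum_insert (by simp)]
          congr 1
          · -- f = 0 part
            rw [Finset.sum_insert (by simp)]
            congr 1
            refine Finset.sum_congr rfl fun i hi => ?_
            simp only [Finset.mem_Icc] at hi
            rw [if_neg (lt_irrefl 0), if_pos (by omega)]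
          · -- f ≥ 1 part
            refine Finset.sum_congr rfl fun f hf => ?_
            simp only [Finset.mem_Icc] at hf
            rw [← hins]
            have hsub : Finset.range (n - f) ⊆ Finset.range n :=
              Finset.range_subset_range.2 (by omega)
            rw [← Finset.sum_subset hsub (fun i hi hni => ?_)]
            · refine Finset.sum_congr rfl fun i _ => ?_
              rw [if_pos (by omega)]
            · have hzero : mcount F I f i = 0 := by
                unfold mcount
                rw [Finset.card_eq_zero, Finset.filter_eq_empty_iff]
                intro j _
                intro hpair
                have := hfi j
                rw [hpair.1, hpair.2] at this
                simp only [Finset.mem_range, not_lt] at hi hni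
                omega
              rw [hzero]
              simp
  have hprd : PRD n q F I = (1 / (n : ℝ)) * ∑ j : α, (1 - (1 - q) ^ wt n F I j) := rfl
  refine ⟨by rw [hprd, hformula], ?_, ?_⟩
  · -- inequality
    rw [hprd]
    have hsum : (n : ℝ) * q ≤ ∑ j : α, (1 - (1 - q) ^ wt n F I j) := by
      calc (n : ℝ) * q = ∑ _j : α, q := by
            rw [Finset.sum_const, Finset.card_univ, hcard, nsmul_eq_mul]
        _ ≤ _ := Finset.sum_le_sum fun j _ => hterm j
    calc q = (1 / (n:ℝ)) * ((n:ℝ) * q) := by field_simp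
      _ ≤ _ := mul_le_mul_of_nonneg_left hsum (by positivity)
  · -- equality characterization
    have hsumq : (∑ _j : α, q) = (n : ℝ) * q := by
      rw [Finset.sum_const, Finset.card_univ, hcard, nsmul_eq_mul]
    have hne : (n:ℝ) ≠ 0 := ne_of_gt hn0
    have key : PRD n q F I = q ↔
        ∀ j ∈ (univ : Finset α), q = 1 - (1 - q) ^ wt n F I j := by
      rw [hprd, one_div, inv_mul_eq_div, div_eq_iff hne,
        show q * (n:ℝ) = ∑ _j : α, q by rw [hsumq]; ring, eq_comm]
      exact Finset.sum_eq_sum_iff_of_le (fun j _ => hterm j)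
    rw [key]
    constructor
    · intro h j
      have hj := h j (Finset.mem_univ j)
      have hwt : wt n F I j = 1 := by
        by_contra hne
        have h2 : 2 ≤ wt n F I j := by have := hwt1 j; omega
        have : (1 - q) ^ wt n F I j < (1 - q) ^ 1 :=
          pow_lt_pow_right_of_lt_one₀ hq' hq'' (by omega)
        simp only [pow_one] at this
        nlinarith
      unfold wt at hwt
      split_ifs at hwt with h1 h2 <;> [left; right; right] <;> first
        | omega
        | (constructor <;> omega)
    · intro h j _
      have hwt : wt n F I j = 1 := by
        rcases h j with h1 | ⟨h1, h2⟩ <;> unfold wt <;>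
          split_ifs with ha hb <;> omega
      rw [hwt, pow_one]
      ring
end

section
/- For all real q ∈ [0,1] and integers n ≥ 3, and reals a, b with n/2 ≤ a and 0 ≤ b ≤ n − a, the quantity q + (1 − 2((a+b)(n−b) − a²)/(n(n−1))) q(1−q) is at least q + ((3n−8)/(8(n−1))) q(1−q); equivalently, 2((a+b)(n−b) − a²) ≤ n(n−1) − n(n−1)(3n−8)/(8(n−1)) for such a, b, with the bound attained via a = n/2, b = n/4. -/
/-- The key optimization inequality behind the lower bound on the efficiency of the
duples mechanism on structurally balanced networks. -/
theorem stmt19 (q : ℝ) (n : ℕ) (a b : ℝ)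
    (hq0 : 0 ≤ q) (hq1 : q ≤ 1) (hn : 3 ≤ n)
    (ha : (n : ℝ) / 2 ≤ a) (hb0 : 0 ≤ b) (hb : b ≤ (n : ℝ) - a) :
    (q + ((3 * (n : ℝ) - 8) / (8 * ((n : ℝ) - 1))) * (q * (1 - q)) ≤
      q + (1 - 2 * ((a + b) * ((n : ℝ) - b) - a ^ 2) / ((n : ℝ) * ((n : ℝ) - 1))) *
        (q * (1 - q))) ∧
    (2 * ((a + b) * ((n : ℝ) - b) - a ^ 2) ≤
      (n : ℝ) * ((n : ℝ) - 1) -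
        (n : ℝ) * ((n : ℝ) - 1) * ((3 * (n : ℝ) - 8) / (8 * ((n : ℝ) - 1)))) ∧
    (2 * (((n : ℝ) / 2 + (n : ℝ) / 4) * ((n : ℝ) - (n : ℝ) / 4) - ((n : ℝ) / 2) ^ 2) =
      (n : ℝ) * ((n : ℝ) - 1) -
        (n : ℝ) * ((n : ℝ) - 1) * ((3 * (n : ℝ) - 8) / (8 * ((n : ℝ) - 1)))) := by
  have hn3 : (3 : ℝ) ≤ (n : ℝ) := by exact_mod_cast hn
  have hn1 : (0 : ℝ) < (n : ℝ) - 1 := by linarith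
  have hn0 : (0 : ℝ) < (n : ℝ) := by linarith
  have hne : (n : ℝ) - 1 ≠ 0 := ne_of_gt hn1
  have hrhs : (n : ℝ) * ((n : ℝ) - 1) -
      (n : ℝ) * ((n : ℝ) - 1) * ((3 * (n : ℝ) - 8) / (8 * ((n : ℝ) - 1))) =
      5 * (n : ℝ) ^ 2 / 8 := by
    field_simp
    ring
  have hkey : 2 * ((a + b) * ((n : ℝ) - b) - a ^ 2) ≤ 5 * (n : ℝ) ^ 2 / 8 := by
    nlinarith [sq_nonneg (a - (n : ℝ) / 2), sq_nonneg (b - (n : ℝ) / 4),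
      mul_nonneg (by linarith : (0:ℝ) ≤ a - (n : ℝ) / 2) hb0]
  refine ⟨?_, by rw [hrhs]; exact hkey, by rw [hrhs]; ring⟩
  have hq : 0 ≤ q * (1 - q) := mul_nonneg hq0 (by linarith)
  have hcoef : (3 * (n : ℝ) - 8) / (8 * ((n : ℝ) - 1)) ≤
      1 - 2 * ((a + b) * ((n : ℝ) - b) - a ^ 2) / ((n : ℝ) * ((n : ℝ) - 1)) := by
    have hx : 2 * ((a + b) * ((n : ℝ) - b) - a ^ 2) / ((n : ℝ) * ((n : ℝ) - 1)) ≤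
        5 * (n : ℝ) / (8 * ((n : ℝ) - 1)) := by
      rw [div_le_div_iff₀ (by positivity) (by positivity)]
      nlinarith [hkey, hn1, hn0]
    have heq : 1 - 5 * (n : ℝ) / (8 * ((n : ℝ) - 1)) =
        (3 * (n : ℝ) - 8) / (8 * ((n : ℝ) - 1)) := by
      field_simp
      ring
    linarith
  nlinarith [mul_le_mul_of_nonneg_right hcoef hq]
end
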